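/- For θ̃ the automorphism of n·q extending θ (as in Lemma on eigenspaces), the fixed-point subalgebra q⟨nk⟩^{θ̂} of the Takiff algebra q⟨nk⟩ under θ̂ is isomorphic to the cyclic contraction C_{θ̃}(n·q) of n·q associated with θ̃. -/

import Mathlib

open Finset Module

/-!
Put `N = nk`. A tuple `x` fixed by `θ̂` has `θ xᵢ = μ^{ni} xᵢ`, so the geometric vector
`(μ^{il} xᵢ)_l ∈ n·q` is a `μⁱ`-eigenvector of `θ̃`. Hence `e x = ∑ᵢ (μ^{il} xᵢ)_l` has these
vectors as its `θ̃`-eigencomponents, which makes `e` injective on the fixed points. Conversely,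
every `μⁱ`-eigenvector of `θ̃` is such a geometric vector whose first entry has `θ`-eigenvalue
`μ^{ni}`, and the eigenprojections sum to the identity, so `e` is onto. Finally `[xᵢ, yⱼ]` sits
in Takiff degree `i + j` and is dropped exactly when `i + j ≥ N`, which is the truncation in the
contraction bracket.
-/
/-- The bracket of the Takiff algebra `q⟨m⟩`, modelled on `Fin m → L`:
`[x⃗,y⃗]ₗ = ∑_{i+j=l} [xᵢ,yⱼ]`. -/
def takiffBracket {L : Type*} [LieRing L] (m : ℕ) (x y : Fin m → L) : Fin m → L :=
  fun l => ∑ i : Fin m, ∑ j : Fin m,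
    if (i : ℕ) + (j : ℕ) = (l : ℕ) then ⁅x i, y j⁆ else 0

theorem Finset.sum_range_shift_of_apply_eq {M : Type*} [AddCancelCommMonoid M] (f : ℕ → M)
    {N : ℕ} (h : f N = f 0) : ∑ s ∈ range N, f (s + 1) = ∑ s ∈ range N, f s :=
  add_right_cancel ((sum_range_succ' f N).symm.trans (h ▸ sum_range_succ f N))

theorem IsPrimitiveRoot.sum_range_pow_mul_inv_pow {𝕜 : Type*} [Field 𝕜] {μ : 𝕜} {N : ℕ}
    (hμ : IsPrimitiveRoot μ N) {i j : ℕ} (hi : i < N) (hj : j < N) :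
    ∑ s ∈ range N, (μ ^ i * μ⁻¹ ^ j) ^ s = if i = j then (N : 𝕜) else 0 := by
  have hμ0 : μ ≠ 0 := hμ.ne_zero (by omega)
  split_ifs with hij
  · simp [hij, inv_pow, mul_inv_cancel₀ (pow_ne_zero j hμ0)]
  · have hne : μ ^ i * μ⁻¹ ^ j ≠ 1 := by
      rw [inv_pow, Ne, mul_inv_eq_one₀ (pow_ne_zero j hμ0)]
      exact fun h => hij (hμ.pow_inj hi hj h)
    rw [geom_sum_eq hne, mul_pow, ← pow_mul, ← pow_mul, mul_comm i, mul_comm j, pow_mul,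
      pow_mul, hμ.pow_eq_one, inv_pow, hμ.pow_eq_one]
    simp

section EigenProj

variable {𝕜 V : Type*} [Field 𝕜] [AddCommGroup V] [Module 𝕜 V]

/-- The projection onto the `μ ^ j`-eigenspace of `T`, when `T ^ N = 1` and `μ` is a primitive
`N`-th root of unity. -/
noncomputable def eigenProj (T : Module.End 𝕜 V) (μ : 𝕜) (N j : ℕ) : Module.End 𝕜 V :=
  (N : 𝕜)⁻¹ • ∑ s ∈ range N, (μ⁻¹ ^ (j * s)) • T ^ s

theorem eigenProj_apply (T : Module.End 𝕜 V) (μ : 𝕜) (N j : ℕ) (a : V) :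
    eigenProj T μ N j a = (N : 𝕜)⁻¹ • ∑ s ∈ range N, μ⁻¹ ^ (j * s) • (⇑T)^[s] a := by
  simp [eigenProj, LinearMap.sum_apply, Module.End.pow_apply]

variable {T : Module.End 𝕜 V} {μ : 𝕜} {N : ℕ} [NeZero N] (hμ : IsPrimitiveRoot μ N)
include hμ

theorem eigenProj_apply_of_apply_eq_pow_smul {i j : ℕ} (hi : i < N) (hj : j < N) {v : V}
    (hv : T v = μ ^ i • v) : eigenProj T μ N j v = if i = j then v else 0 := by
  have hpow : ∀ s, (T ^ s) v = (μ ^ i) ^ s • v := fun s => by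
    induction s with
    | zero => simp
    | succ s ih => rw [pow_succ', Module.End.mul_apply, ih, map_smul, hv, smul_smul, pow_succ]
  have := hμ.neZero'
  simp only [eigenProj, LinearMap.smul_apply, LinearMap.sum_apply, hpow, smul_smul,
    ← Finset.sum_smul]
  simp_rw [pow_mul μ⁻¹ j, ← mul_pow, mul_comm (μ⁻¹ ^ j), hμ.sum_range_pow_mul_inv_pow hi hj]
  split_ifs
  · rw [inv_mul_cancel₀ (NeZero.ne _), one_smul]
  · rw [mul_zero, zero_smul]

theorem mul_eigenProj (hT : T ^ N = 1) (j : ℕ) :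
    T * eigenProj T μ N j = μ ^ j • eigenProj T μ N j := by
  have hμ0 : μ ≠ 0 := hμ.ne_zero (NeZero.ne N)
  have hperiodic : μ⁻¹ ^ (j * N) • T ^ N = μ⁻¹ ^ (j * 0) • T ^ 0 := by
    rw [mul_comm j, pow_mul, inv_pow, hμ.pow_eq_one, hT]
    simp
  have hstep (s : ℕ) :
      T * (μ⁻¹ ^ (j * s) • T ^ s) = μ ^ j • μ⁻¹ ^ (j * (s + 1)) • T ^ (s + 1) := by
      rw [mul_smul_comm, ← pow_succ', smul_smul]
      congr 1
      rw [mul_add, mul_one, pow_add, mul_left_comm, inv_pow μ j,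
        mul_inv_cancel₀ (pow_ne_zero j hμ0), mul_one]
  rw [eigenProj, mul_smul_comm, Finset.mul_sum, Finset.sum_congr rfl fun s _ => hstep s,
    ← Finset.smul_sum, sum_range_shift_of_apply_eq (fun s => μ⁻¹ ^ (j * s) • T ^ s) hperiodic,
    smul_comm]

theorem sum_eigenProj : ∑ j ∈ range N, eigenProj T μ N j = 1 := by
  have := hμ.neZero'
  have horth : ∀ s ∈ range N, ∑ j ∈ range N, μ⁻¹ ^ (j * s) = if s = 0 then (N : 𝕜) else 0 :=
    fun s hs => by
      simpa [← pow_mul, mul_comm s, eq_comm] using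
        hμ.sum_range_pow_mul_inv_pow (NeZero.pos N) (mem_range.mp hs)
  simp only [eigenProj, ← Finset.smul_sum]
  rw [Finset.sum_comm]
  simp only [← Finset.sum_smul]
  rw [Finset.sum_congr rfl fun s hs => congrArg (· • T ^ s) (horth s hs)]
  simp [NeZero.pos N, NeZero.ne]

end EigenProj

section CyclicExtension

variable {R L : Type*} [CommSemiring R] [AddCommMonoid L] [Module R L] {n : ℕ}

/-- The automorphism `θ̃` of `n·q`. -/
def cyclicExtension (θ : L →ₗ[R] L) (hn : 0 < n) : Module.End R (Fin n → L) :=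
  LinearMap.pi fun l =>
    if h : (l : ℕ) + 1 < n then LinearMap.proj ⟨l + 1, h⟩ else θ ∘ₗ LinearMap.proj ⟨0, hn⟩

def geomVec (c : R) : L →ₗ[R] (Fin n → L) :=
  LinearMap.pi fun l => c ^ (l : ℕ) • LinearMap.id

@[simp]
theorem geomVec_apply (c : R) (x : L) (l : Fin n) : geomVec c x l = c ^ (l : ℕ) • x := rfl

variable (θ : L →ₗ[R] L) (hn : 0 < n)

theorem cyclicExtension_apply (a : Fin n → L) (l : Fin n) :
    cyclicExtension θ hn a l =
      if h : (l : ℕ) + 1 < n then a ⟨l + 1, h⟩ else θ (a ⟨0, hn⟩) := by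
  unfold cyclicExtension
  split_ifs <;> simp [*]

theorem cyclicExtension_pow_apply_of_lt (s : ℕ) (a : Fin n → L) (l : Fin n)
    (h : (l : ℕ) + s < n) :
    (cyclicExtension θ hn ^ s) a l = a ⟨l + s, h⟩ := by
  induction s generalizing a with
  | zero => rfl
  | succ s ih =>
    rw [pow_succ, Module.End.mul_apply, ih _ (by omega), cyclicExtension_apply]
    simp [add_assoc, h]

theorem cyclicExtension_pow_self_apply (a : Fin n → L) (l : Fin n) :
    (cyclicExtension θ hn ^ n) a l = θ (a l) := by
  have hsplit : cyclicExtension θ hn ^ n = cyclicExtension θ hn ^ (n - 1 - l) *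
      cyclicExtension θ hn * cyclicExtension θ hn ^ (l : ℕ) := by
    rw [← pow_succ, ← pow_add]
    congr 1
    omega
  rw [hsplit, Module.End.mul_apply, Module.End.mul_apply,
    cyclicExtension_pow_apply_of_lt θ hn _ _ _ (by omega), cyclicExtension_apply,
    dif_neg (by dsimp only; omega),
    cyclicExtension_pow_apply_of_lt θ hn _ _ _ (by dsimp only; omega)]
  simp

theorem cyclicExtension_pow_mul_apply (j : ℕ) (a : Fin n → L) (l : Fin n) :
    (cyclicExtension θ hn ^ (n * j)) a l = (⇑θ)^[j] (a l) := by
  induction j generalizing a with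
  | zero => rfl
  | succ j ih =>
    rw [mul_add_one, pow_add, Module.End.mul_apply, ih, cyclicExtension_pow_self_apply,
      Function.iterate_succ_apply]

theorem cyclicExtension_pow_eq_one {k : ℕ} (hθ : (⇑θ)^[k] = id) :
    cyclicExtension θ hn ^ (n * k) = 1 :=
  LinearMap.ext fun a => funext fun l => by
    rw [cyclicExtension_pow_mul_apply, hθ]
    rfl

theorem cyclicExtension_geomVec {c : R} {x : L} (hx : θ x = c ^ n • x) :
    cyclicExtension θ hn (geomVec c x) = c • geomVec c x := by
  funext l
  rw [cyclicExtension_apply]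
  split_ifs with h
  · simp [pow_succ', smul_smul]
  · simp [hx, smul_smul, ← pow_succ', show (l : ℕ) + 1 = n by omega]

variable {θ hn}

theorem eq_geomVec_of_cyclicExtension_eq_smul {c : R} {p : Fin n → L}
    (hp : cyclicExtension θ hn p = c • p) : p = geomVec c (p ⟨0, hn⟩) := by
  funext ⟨l, hl⟩
  induction l with
  | zero => simp
  | succ l ih =>
    have := congrFun hp ⟨l, by omega⟩
    rw [cyclicExtension_apply, dif_pos hl] at this
    simp [this, ih (by omega), smul_smul, pow_succ']

theorem map_apply_zero_of_cyclicExtension_eq_smul {c : R} {p : Fin n → L}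
    (hp : cyclicExtension θ hn p = c • p) : θ (p ⟨0, hn⟩) = c ^ n • p ⟨0, hn⟩ := by
  have := congrFun hp ⟨n - 1, by omega⟩
  rw [cyclicExtension_apply, dif_neg (by dsimp only; omega), Pi.smul_apply,
    eq_geomVec_of_cyclicExtension_eq_smul hp] at this
  simpa [smul_smul, ← pow_succ', Nat.sub_add_cancel hn] using this

end CyclicExtension

/-- The isomorphism `q⟨N⟩^{θ̂} → C_{θ̃}(n·q)`. -/
def fourierMap {R L : Type*} [CommSemiring R] [AddCommMonoid L] [Module R L] (μ : R)
    (n N : ℕ) : (Fin N → L) →ₗ[R] (Fin n → L) :=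
  ∑ i : Fin N, geomVec (μ ^ (i : ℕ)) ∘ₗ LinearMap.proj i

theorem fourierMap_apply {R L : Type*} [CommSemiring R] [AddCommMonoid L] [Module R L] (μ : R)
    (n N : ℕ) (x : Fin N → L) :
    fourierMap μ n N x = ∑ i : Fin N, geomVec (μ ^ (i : ℕ)) (x i) := by
  simp [fourierMap, LinearMap.sum_apply]

theorem fourierMap_takiffBracket {R L : Type*} [CommRing R] [LieRing L] [LieAlgebra R L] (μ : R)
    (n N : ℕ) (x y : Fin N → L) :
    fourierMap μ n N (takiffBracket N x y) =
      ∑ i : Fin N, ∑ j : Fin N, if (i : ℕ) + j < N then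
        (fun l => ⁅geomVec (μ ^ (i : ℕ)) (x i) l, geomVec (μ ^ (j : ℕ)) (y j) l⁆) else 0 := by
  funext l
  simp only [fourierMap_apply, takiffBracket, Finset.sum_apply, geomVec_apply, Finset.smul_sum,
    smul_ite, smul_zero, ite_apply, Pi.zero_apply]
  rw [Finset.sum_comm]
  refine Finset.sum_congr rfl fun i _ => ?_
  rw [Finset.sum_comm]
  refine Finset.sum_congr rfl fun j _ => ?_
  rw [Fin.sum_univ_eq_sum_range
    (fun m => if (i : ℕ) + j = m then (μ ^ m) ^ (l : ℕ) • ⁅x i, y j⁆ else 0), Finset.sum_ite_eq]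
  simp [lie_smul, smul_lie, smul_smul, ← mul_pow, ← pow_add, mul_comm]

theorem eigenProj_fourierMap {𝕜 L : Type*} [Field 𝕜] [AddCommGroup L] [Module 𝕜 L]
    {θ : L →ₗ[𝕜] L} {n N : ℕ} (hn : 0 < n) [NeZero N] {μ : 𝕜} (hμ : IsPrimitiveRoot μ N)
    {x : Fin N → L} (hx : ∀ i : Fin N, θ (x i) = (μ ^ n) ^ (i : ℕ) • x i) (j : Fin N) :
    eigenProj (cyclicExtension θ hn) μ N j (fourierMap μ n N x) =
      geomVec (μ ^ (j : ℕ)) (x j) := by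
  have heigen (i : Fin N) : cyclicExtension θ hn (geomVec (μ ^ (i : ℕ)) (x i)) =
      μ ^ (i : ℕ) • geomVec (μ ^ (i : ℕ)) (x i) :=
    cyclicExtension_geomVec θ hn (by rw [hx, pow_right_comm])
  rw [fourierMap_apply, map_sum, Finset.sum_congr rfl fun i _ =>
    eigenProj_apply_of_apply_eq_pow_smul hμ i.isLt j.isLt (heigen i)]
  simp [Fin.val_inj]

theorem takiff_fixed_points_iso_cyclic_contraction_general
    {𝕜 L : Type*} [Field 𝕜] [LieRing L] [LieAlgebra 𝕜 L]
    (n k : ℕ) (hn : 0 < n) (hk : 0 < k)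
    (μ : 𝕜) (hμ : IsPrimitiveRoot μ (n * k))
    (θ : L ≃ₗ[𝕜] L)
    (hθk : (⇑θ)^[k] = id)
    -- the extension `θ̃` of `θ` to `n·q`
    (Θ : (Fin n → L) → (Fin n → L))
    (hΘ : ∀ (a : Fin n → L) (l : Fin n), Θ a l =
      if h : (l : ℕ) + 1 < n then a ⟨(l : ℕ) + 1, h⟩ else θ (a ⟨0, hn⟩))
    -- the projections onto the `μʲ`-eigenspaces of `θ̃`
    (proj : ℕ → (Fin n → L) → (Fin n → L))
    (hproj : ∀ (j : ℕ) (a : Fin n → L), proj j a =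
      ((n * k : ℕ) : 𝕜)⁻¹ • ∑ s ∈ Finset.range (n * k), (μ⁻¹) ^ (j * s) • Θ^[s] a)
    -- the bracket of the cyclic contraction `C_{θ̃}(n·q)`
    (Bc : (Fin n → L) → (Fin n → L) → (Fin n → L))
    (hBc : ∀ a a' : Fin n → L, Bc a a' =
      ∑ i ∈ Finset.range (n * k), ∑ j ∈ Finset.range (n * k),
        if i + j ≤ n * k - 1 then (fun l => ⁅proj i a l, proj j a' l⁆) else 0) :
    -- the isomorphism `q⟨nk⟩^{θ̂} ≃ C_{θ̃}(n·q)`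
    ∃ e : (Fin (n * k) → L) →ₗ[𝕜] (Fin n → L),
      Set.InjOn e {x : Fin (n * k) → L |
        ∀ i : Fin (n * k), θ (x i) = (μ ^ n) ^ (i : ℕ) • x i} ∧
      (∀ a : Fin n → L, ∃ x : Fin (n * k) → L,
        (∀ i : Fin (n * k), θ (x i) = (μ ^ n) ^ (i : ℕ) • x i) ∧ e x = a) ∧
      (∀ x y : Fin (n * k) → L,
        (∀ i : Fin (n * k), θ (x i) = (μ ^ n) ^ (i : ℕ) • x i) →
        (∀ i : Fin (n * k), θ (y i) = (μ ^ n) ^ (i : ℕ) • y i) →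
        e (takiffBracket (n * k) x y) = Bc (e x) (e y)) := by
  have hN : 0 < n * k := Nat.mul_pos hn hk
  have : NeZero (n * k) := ⟨hN.ne'⟩
  obtain rfl : Θ = cyclicExtension (θ : L →ₗ[𝕜] L) hn :=
    funext fun a => funext fun l => by rw [hΘ, cyclicExtension_apply]; rfl
  obtain rfl : proj = fun j => ⇑(eigenProj (cyclicExtension (θ : L →ₗ[𝕜] L) hn) μ (n * k) j) :=
    funext fun j => funext fun a => by rw [hproj, eigenProj_apply]
  refine ⟨fourierMap μ n (n * k), fun x hx y hy hxy => funext fun i => ?_, fun a => ?_,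
    fun x y hx hy => ?_⟩
  · have h := congrArg (eigenProj (cyclicExtension (θ : L →ₗ[𝕜] L) hn) μ (n * k) i) hxy
    simpa [eigenProj_fourierMap hn hμ hx, eigenProj_fourierMap hn hμ hy] using
      congrFun h ⟨0, hn⟩
  · set T := cyclicExtension (θ : L →ₗ[𝕜] L) hn
    have hp (i : ℕ) : T (eigenProj T μ (n * k) i a) = μ ^ i • eigenProj T μ (n * k) i a :=
      LinearMap.congr_fun (mul_eigenProj hμ (cyclicExtension_pow_eq_one _ hn hθk) i) a
    refine ⟨fun i => eigenProj T μ (n * k) i a ⟨0, hn⟩, fun i => ?_, ?_⟩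
    · rw [pow_right_comm]
      exact map_apply_zero_of_cyclicExtension_eq_smul (hp i)
    · calc fourierMap μ n (n * k) (fun i => eigenProj T μ (n * k) i a ⟨0, hn⟩)
          = ∑ i ∈ range (n * k), eigenProj T μ (n * k) i a := by
            rw [fourierMap_apply, Finset.sum_range]
            exact Finset.sum_congr rfl fun i _ =>
              (eq_geomVec_of_cyclicExtension_eq_smul (hp i)).symm
        _ = a := by rw [← LinearMap.sum_apply, sum_eigenProj hμ, Module.End.one_apply]
  · simp only [hBc, fourierMap_takiffBracket, Finset.sum_range, eigenProj_fourierMap hn hμ hx,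
      eigenProj_fourierMap hn hμ hy, Nat.le_sub_one_iff_lt hN]

/-- Let `θ ∈ Aut(q)` have order `k`, `μ` a primitive `nk`-th root of
unity, `ζ = μⁿ`, and let `θ̃` be the order-`nk` automorphism of `n·q` extending `θ`
(cyclic shift composed with `θ`).  Then the fixed-point subalgebra `q⟨nk⟩^{θ̂}` of the
Takiff algebra `q⟨nk⟩` under `θ̂` (tuples `x` with `x_i ∈ q_{ī}`, with the truncated
Takiff bracket) is isomorphic to the cyclic contraction `C_{θ̃}(n·q)` of `n·q`
associated with the `ℤ_{nk}`-grading of `n·q` by `θ̃`-eigenspaces. -/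
theorem takiff_fixed_points_iso_cyclic_contraction
    {𝕜 L : Type*} [Field 𝕜] [CharZero 𝕜] [LieRing L] [LieAlgebra 𝕜 L]
    (n k : ℕ) (hn : 0 < n) (hk : 0 < k)
    (μ : 𝕜) (hμ : IsPrimitiveRoot μ (n * k))
    (θ : L ≃ₗ[𝕜] L) (hbr : ∀ x y : L, θ ⁅x, y⁆ = ⁅θ x, θ y⁆)
    (hθk : (⇑θ)^[k] = id) (hθmin : ∀ j, 0 < j → j < k → (⇑θ)^[j] ≠ id)
    -- the extension `θ̃` of `θ` to `n·q`
    (Θ : (Fin n → L) → (Fin n → L))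
    (hΘ : ∀ (a : Fin n → L) (l : Fin n), Θ a l =
      if h : (l : ℕ) + 1 < n then a ⟨(l : ℕ) + 1, h⟩ else θ (a ⟨0, hn⟩))
    -- the projections onto the `μʲ`-eigenspaces of `θ̃`
    (proj : ℕ → (Fin n → L) → (Fin n → L))
    (hproj : ∀ (j : ℕ) (a : Fin n → L), proj j a =
      ((n * k : ℕ) : 𝕜)⁻¹ • ∑ s ∈ Finset.range (n * k), (μ⁻¹) ^ (j * s) • Θ^[s] a)
    -- the bracket of the cyclic contraction `C_{θ̃}(n·q)`
    (Bc : (Fin n → L) → (Fin n → L) → (Fin n → L))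
    (hBc : ∀ a a' : Fin n → L, Bc a a' =
      ∑ i ∈ Finset.range (n * k), ∑ j ∈ Finset.range (n * k),
        if i + j ≤ n * k - 1 then (fun l => ⁅proj i a l, proj j a' l⁆) else 0) :
    -- the isomorphism `q⟨nk⟩^{θ̂} ≃ C_{θ̃}(n·q)`
    ∃ e : (Fin (n * k) → L) →ₗ[𝕜] (Fin n → L),
      Set.InjOn e {x : Fin (n * k) → L |
        ∀ i : Fin (n * k), θ (x i) = (μ ^ n) ^ (i : ℕ) • x i} ∧
      (∀ a : Fin n → L, ∃ x : Fin (n * k) → L,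
        (∀ i : Fin (n * k), θ (x i) = (μ ^ n) ^ (i : ℕ) • x i) ∧ e x = a) ∧
      (∀ x y : Fin (n * k) → L,
        (∀ i : Fin (n * k), θ (x i) = (μ ^ n) ^ (i : ℕ) • x i) →
        (∀ i : Fin (n * k), θ (y i) = (μ ^ n) ^ (i : ℕ) • y i) →
        e (takiffBracket (n * k) x y) = Bc (e x) (e y)) :=
  takiff_fixed_points_iso_cyclic_contraction_general n k hn hk μ hμ θ hθk Θ hΘ proj hproj Bc hBc
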